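/- arXiv:2110.15902 — 2 statements merged into one kernel-verified Lean document; each statement's English description precedes it below -/
import Mathlib

section
/- Every isomorphism-invariant subset P ⊆ 𝒢 that has the Baire property (i.e., P equals the symmetric difference of an open set and a meager set) is either meager or comeager in 𝒢. -/
/-!
Relabellings `π` of `ℕ` fixing `0` act on `𝒢` by homeomorphisms, and `π` is an isomorphism from
`Ḡ` onto the relabelled group, so an isomorphism-invariant set is invariant under this action.
The action is topologically transitive: a basic open set constrains only finitely many entries of
a table, and `Ḡ` and `H̄` both embed in `Ḡ × H̄`, so two bijections `ℕ ≃ Ḡ × H̄` extending these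
embeddings on the finitely many relevant points transport `Ḡ × H̄` to tables in the two basic open
sets, and these tables differ by a relabelling.

In a Baire space, a set `P` with the Baire property, residually equal to an open `U`, and invariant
under a topologically transitive family of homeomorphisms is meagre or comeagre: if `U` is nonempty
it is dense, since for an open `V` disjoint from `U` some nonempty open `π⁻¹ U ∩ V` would be
residually equal to `U ∩ V = ∅`. `𝒢` is Baire, being Polish: `G ↦ (G, inversion of Ḡ)` embeds it
as a closed subset of `(ℕ × ℕ → ℕ) × (ℕ → ℕ)`.
-/

/-- The set of group multiplication tables on `ℕ` with identity `0`. -/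
def GroupTables : Set (ℕ × ℕ → ℕ) :=
  {m | (∀ a b c : ℕ, m (m (a, b), c) = m (a, m (b, c))) ∧
       (∀ a : ℕ, m (a, 0) = a) ∧
       (∀ a : ℕ, m (0, a) = a) ∧
       (∀ a : ℕ, ∃ b : ℕ, m (a, b) = 0 ∧ m (b, a) = 0)}

/-- The carrier of the group `Ḡ` associated to a table `G ∈ 𝒢` (a copy of `ℕ`). -/
def Carrier (_G : ↥GroupTables) : Type := ℕ

noncomputable instance instGroupCarrier (G : ↥GroupTables) : Group (Carrier G) where
  mul a b := G.1 (a, b)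
  one := (0 : ℕ)
  inv a := Classical.choose (G.2.2.2.2 a)
  mul_assoc a b c := G.2.1 a b c
  one_mul a := G.2.2.2.1 a
  mul_one a := G.2.2.1 a
  inv_mul_cancel a := (Classical.choose_spec (G.2.2.2.2 a)).2

/-- Inclusion of `ℕ` into the carrier of `Ḡ`. -/
def toC (G : ↥GroupTables) (n : ℕ) : Carrier G := n

/-- Projection of the carrier of `Ḡ` back to `ℕ`. -/
def fromC (G : ↥GroupTables) (x : Carrier G) : ℕ := x

/-- A set of tables is isomorphism-invariant if membership only depends on the
isomorphism type of the associated group. -/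
def IsoInvariant (P : Set ↥GroupTables) : Prop :=
  ∀ G H : ↥GroupTables, Nonempty (Carrier G ≃* Carrier H) → (G ∈ P ↔ H ∈ P)

open Topology Filter Set Function

theorem BaireMeasurableSet.isMeagre_or_mem_residual_of_invariant {X ι : Type*}
    [TopologicalSpace X] [BaireSpace X] (g : ι → X ≃ₜ X)
    (htrans : ∀ U V : Set X, IsOpen U → IsOpen V → U.Nonempty → V.Nonempty →
      ∃ i, (g i ⁻¹' U ∩ V).Nonempty)
    {P : Set X} (hP : BaireMeasurableSet P) (hinv : ∀ i x, g i x ∈ P ↔ x ∈ P) :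
    IsMeagre P ∨ P ∈ residual X := by
  obtain ⟨U, hU, hPU⟩ := hP.residualEq_isOpen
  rcases U.eq_empty_or_nonempty with rfl | hUne
  · exact .inl (eventuallyEq_empty.1 hPU)
  refine .inr (eventuallyEq_univ.1 (hPU.trans (eventuallyEq_univ.2 ?_)))
  refine residual_of_dense_open hU (dense_iff_inter_open.2 fun V hV hVne => ?_)
  by_contra hVU
  obtain ⟨i, hi⟩ := htrans U V hU hV hUne hVne
  refine not_isMeagre_of_isOpen ((hU.preimage (g i).continuous).inter hV) hi ?_
  have hgPU : (P ∘ g i) =ᶠ[residual X] (U ∘ g i) :=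
    hPU.comp_tendsto (tendsto_residual_of_isOpenMap (g i).continuous (g i).isOpenMap)
  filter_upwards [hPU, hgPU] with x hx hgx ⟨hgxU, hxV⟩
  have hxP : x ∈ P := (hinv i x).1 (hgx.mpr hgxU)
  exact hVU ⟨x, hxV, hx.mp hxP⟩

theorem Continuous.apply_of_discreteTopology {X I B : Type*} [TopologicalSpace X]
    [TopologicalSpace I] [DiscreteTopology I] [TopologicalSpace B] {F : X → I → B} {q : X → I}
    (hF : Continuous F) (hq : Continuous q) : Continuous fun x => F x (q x) :=
  (continuous_prod_of_discrete_right.2 fun i => continuous_apply i :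
    Continuous fun p : (I → B) × I => p.1 p.2).comp (hF.prodMk hq)

theorem Cardinal.exists_equiv_extend_finset {β : Type*} [Countable β] [Infinite β] (f : ℕ ↪ β)
    (S : Finset ℕ) : ∃ e : ℕ ≃ β, ∀ n ∈ S, e n = f n := by
  obtain ⟨e, he⟩ := Cardinal.extend_function_of_lt (s := (S : Set ℕ))
    ((Embedding.subtype _).trans f) (by simp)
    (nonempty_equiv_of_countable)
  exact ⟨e, fun n hn => he ⟨n, hn⟩⟩

namespace GroupTables

section Polish

noncomputable def toWithInv (G : ↥GroupTables) : (ℕ × ℕ → ℕ) × (ℕ → ℕ) :=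
  (G.1, fun a => fromC G (toC G a)⁻¹)

def tablesWithInv : Set ((ℕ × ℕ → ℕ) × (ℕ → ℕ)) :=
  {p | (∀ a b c : ℕ, p.1 (p.1 (a, b), c) = p.1 (a, p.1 (b, c))) ∧
       (∀ a : ℕ, p.1 (a, 0) = a) ∧ (∀ a : ℕ, p.1 (0, a) = a) ∧
       (∀ a : ℕ, p.1 (a, p.2 a) = 0 ∧ p.1 (p.2 a, a) = 0)}

theorem isClosed_tablesWithInv : IsClosed tablesWithInv := by
  have hval (q : ℕ × ℕ) : Continuous fun p : (ℕ × ℕ → ℕ) × (ℕ → ℕ) => p.1 q :=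
    (continuous_apply q).comp continuous_fst
  have hinv (a : ℕ) : Continuous fun p : (ℕ × ℕ → ℕ) × (ℕ → ℕ) => p.2 a :=
    (continuous_apply a).comp continuous_snd
  have hmul {f g : (ℕ × ℕ → ℕ) × (ℕ → ℕ) → ℕ} (hf : Continuous f) (hg : Continuous g) :
      Continuous fun p : (ℕ × ℕ → ℕ) × (ℕ → ℕ) => p.1 (f p, g p) :=
    continuous_fst.apply_of_discreteTopology (hf.prodMk hg)
  simp only [tablesWithInv, ofPred_and, ofPred_forall]
  exact (isClosed_iInter fun a => isClosed_iInter fun b => isClosed_iInter fun c =>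
      isClosed_eq (hmul (hval _) continuous_const) (hmul continuous_const (hval _))).inter
    ((isClosed_iInter fun a => isClosed_eq (hval _) continuous_const).inter
    ((isClosed_iInter fun a => isClosed_eq (hval _) continuous_const).inter
    (isClosed_iInter fun a => (isClosed_eq (hmul continuous_const (hinv a)) continuous_const).inter
      (isClosed_eq (hmul (hinv a) continuous_const) continuous_const))))

theorem eventually_apply_eq (G : ↥GroupTables) (q : ℕ × ℕ) : ∀ᶠ H in 𝓝 G, H.1 q = G.1 q :=
  ((continuous_apply q).comp continuous_subtype_val).continuousAt.eventually_mem
    (isOpen_discrete {G.1 q} |>.mem_nhds rfl)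

theorem continuous_toWithInv : Continuous toWithInv := by
  refine continuous_subtype_val.prodMk (continuous_pi fun a =>
    continuous_iff_continuousAt.2 fun G => tendsto_nhds_of_eventually_eq ?_)
  filter_upwards [eventually_apply_eq G (a, fromC G (toC G a)⁻¹)] with H hH
  show (toC H a)⁻¹ = toC H (fromC G (toC G a)⁻¹)
  exact inv_eq_of_mul_eq_one_right (hH.trans (mul_inv_cancel (toC G a)))

theorem range_toWithInv : range toWithInv = tablesWithInv := by
  ext ⟨m, i⟩
  constructor
  · rintro ⟨G, hG⟩
    obtain ⟨rfl, rfl⟩ := Prod.ext_iff.1 hG.symm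
    exact ⟨G.2.1, G.2.2.1, G.2.2.2.1,
      fun a => ⟨mul_inv_cancel (toC G a), inv_mul_cancel (toC G a)⟩⟩
  · rintro ⟨hassoc, hright, hleft, hinv⟩
    let G : ↥GroupTables := ⟨m, hassoc, hright, hleft, fun a => ⟨i a, hinv a⟩⟩
    refine ⟨G, Prod.ext rfl (funext fun a => ?_)⟩
    show (toC G a)⁻¹ = toC G (i a)
    exact inv_eq_of_mul_eq_one_right ((hinv a).1 : toC G a * toC G (i a) = 1)

instance : PolishSpace ↥GroupTables :=
  Topology.IsClosedEmbedding.polishSpace (f := toWithInv)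
    ⟨.of_comp continuous_toWithInv continuous_fst .subtypeVal,
      range_toWithInv ▸ isClosed_tablesWithInv⟩

end Polish

section Relabel

variable {K : Type*} [Group K]

def ofEquiv (e : ℕ ≃ K) (he : e 0 = 1) : ↥GroupTables :=
  ⟨fun p => e.symm (e p.1 * e p.2),
    fun a b c => by simp [mul_assoc],
    fun a => by simp [he],
    fun a => by simp [he],
    fun a => ⟨e.symm (e a)⁻¹, by simp [← he], by simp [← he]⟩⟩

theorem ofEquiv_apply (e : ℕ ≃ K) (he : e 0 = 1) (p : ℕ × ℕ) :
    (ofEquiv e he).1 p = e.symm (e p.1 * e p.2) := rfl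

/-- Relabelling by `π` is the transport of `Ḡ` along `π⁻¹`. -/
def relabelFun (π : ℕ ≃ ℕ) (hπ : π 0 = 0) (G : ↥GroupTables) : ↥GroupTables :=
  ⟨fun p => π (G.1 (π.symm p.1, π.symm p.2)),
    (ofEquiv (π.symm.trans (Equiv.refl (Carrier G))) (π.symm_apply_eq.2 hπ.symm)).2⟩

theorem continuous_relabelFun (π : ℕ ≃ ℕ) (hπ : π 0 = 0) : Continuous (relabelFun π hπ) :=
  (continuous_pi fun _ => continuous_of_discreteTopology.comp
    ((continuous_apply _).comp continuous_subtype_val)).subtype_mk _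

def relabel (π : ℕ ≃ ℕ) (hπ : π 0 = 0) : ↥GroupTables ≃ₜ ↥GroupTables where
  toFun := relabelFun π hπ
  invFun := relabelFun π.symm (π.symm_apply_eq.2 hπ.symm)
  left_inv G := Subtype.ext (funext fun p => by simp [relabelFun])
  right_inv G := Subtype.ext (funext fun p => by simp [relabelFun])
  continuous_toFun := continuous_relabelFun π hπ
  continuous_invFun := continuous_relabelFun _ _

theorem relabel_apply (π : ℕ ≃ ℕ) (hπ : π 0 = 0) (G : ↥GroupTables) (p : ℕ × ℕ) :
    (relabel π hπ G).1 p = π (G.1 (π.symm p.1, π.symm p.2)) := rfl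

def relabelMulEquiv (π : ℕ ≃ ℕ) (hπ : π 0 = 0) (G : ↥GroupTables) :
    Carrier G ≃* Carrier (relabel π hπ G) :=
  { π with
    map_mul' := fun a b => by
      show π (G.1 (fromC G a, fromC G b)) =
        π (G.1 (π.symm (π (fromC G a)), π.symm (π (fromC G b))))
      simp }

end Relabel

section Transitivity

theorem exists_finset_cylinder_subset {W : Set ↥GroupTables} (hW : IsOpen W)
    {G : ↥GroupTables} (hG : G ∈ W) :
    ∃ I : Finset (ℕ × ℕ), {H : ↥GroupTables | ∀ p ∈ I, H.1 p = G.1 p} ⊆ W := by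
  obtain ⟨W₀, hW₀, rfl⟩ := isOpen_induced_iff.1 hW
  obtain ⟨I, u, hu, hsub⟩ := isOpen_pi_iff.1 hW₀ G.1 hG
  exact ⟨I, fun H hH => hsub fun p hp => by rw [hH p hp]; exact (hu p hp).2⟩

theorem exists_ofEquiv_eqOn {K : Type*} [Group K] [Countable K] [Infinite K] (G : ↥GroupTables)
    (φ : Carrier G →* K) (hφ : Injective φ) (I : Finset (ℕ × ℕ)) :
    ∃ (e : ℕ ≃ K) (he : e 0 = 1), ∀ p ∈ I, (ofEquiv e he).1 p = G.1 p := by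
  classical
  let S := insert 0 (I.biUnion fun p => {p.1, p.2, G.1 p})
  obtain ⟨e, he⟩ := Cardinal.exists_equiv_extend_finset ⟨fun n => φ (toC G n), hφ⟩ S
  have he' : ∀ n ∈ S, e n = φ (toC G n) := he
  refine ⟨e, (he' 0 (by simp [S])).trans φ.map_one, fun p hp => ?_⟩
  have hmem {n : ℕ} (hn : n = p.1 ∨ n = p.2 ∨ n = G.1 p) : n ∈ S :=
    Finset.mem_insert_of_mem (Finset.mem_biUnion.2 ⟨p, hp, by simpa using hn⟩)
  calc (ofEquiv e _).1 p = e.symm (φ (toC G p.1) * φ (toC G p.2)) := by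
        rw [ofEquiv_apply, he' _ (hmem (.inl rfl)), he' _ (hmem (.inr (.inl rfl)))]
    _ = e.symm (φ (toC G (G.1 p))) := by rw [← map_mul]; rfl
    _ = G.1 p := by rw [← he' _ (hmem (.inr (.inr rfl))), e.symm_apply_apply]

instance (G : ↥GroupTables) : Countable (Carrier G) := inferInstanceAs (Countable ℕ)

instance (G : ↥GroupTables) : Infinite (Carrier G) := inferInstanceAs (Infinite ℕ)

theorem exists_relabel_preimage_inter_nonempty {U V : Set ↥GroupTables} (hU : IsOpen U)
    (hV : IsOpen V) (hUne : U.Nonempty) (hVne : V.Nonempty) :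
    ∃ π : {π : ℕ ≃ ℕ // π 0 = 0}, (relabel π.1 π.2 ⁻¹' U ∩ V).Nonempty := by
  obtain ⟨G, hG⟩ := hUne
  obtain ⟨H, hH⟩ := hVne
  obtain ⟨I, hI⟩ := exists_finset_cylinder_subset hU hG
  obtain ⟨J, hJ⟩ := exists_finset_cylinder_subset hV hH
  obtain ⟨f, hf, hfI⟩ := exists_ofEquiv_eqOn G (MonoidHom.inl _ (Carrier H))
    (fun _ _ h => congrArg Prod.fst h) I
  obtain ⟨g, hg, hgJ⟩ := exists_ofEquiv_eqOn H (MonoidHom.inr (Carrier G) _)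
    (fun _ _ h => congrArg Prod.snd h) J
  have hπ : (g.trans f.symm) 0 = 0 := by simp [hg, ← hf]
  have hrelabel : relabel _ hπ (ofEquiv g hg) = ofEquiv f hf :=
    Subtype.ext (funext fun p => by simp [relabel_apply, ofEquiv_apply])
  exact ⟨⟨_, hπ⟩, ofEquiv g hg, mem_preimage.2 (hrelabel ▸ hI hfI), hJ hgJ⟩

end Transitivity

end GroupTables

/-- 0-1 law: every isomorphism-invariant subset of `𝒢` with the Baire property
(it is the symmetric difference of an open set and a meager set) is either meager
or comeager in `𝒢`. -/
theorem zero_one_law (P : Set ↥GroupTables) (hinv : IsoInvariant P)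
    (hBP : ∃ (U M : Set ↥GroupTables), IsOpen U ∧ IsMeagre M ∧ P = symmDiff U M) :
    IsMeagre P ∨ P ∈ residual ↥GroupTables := by
  obtain ⟨U, M, hU, hM, rfl⟩ := hBP
  have hBaire : BaireMeasurableSet (symmDiff U M) := by
    rw [symmDiff_def]
    exact (hU.baireMeasurableSet.diff hM.baireMeasurableSet).union
      (hM.baireMeasurableSet.diff hU.baireMeasurableSet)
  exact hBaire.isMeagre_or_mem_residual_of_invariant
    (fun π : {π : ℕ ≃ ℕ // π 0 = 0} => GroupTables.relabel π.1 π.2)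
    (fun _ _ => GroupTables.exists_relabel_preimage_inter_nonempty)
    fun π G => (hinv G _ ⟨GroupTables.relabelMulEquiv π.1 π.2 G⟩).symm
end

section
/- For every finitely generated group H, the set E_H = {G ∈ 𝒢 : there is an injective group homomorphism H → Ḡ} is an Fσ subset of 𝒢 (a countable union of closed sets). -/
/-! If `π : F ↠ H` is a presentation of `H` by a free group on finitely many generators `α`,
then `H` embeds into `Ḡ` iff some assignment `t : α → ℕ` of the generators induces a
homomorphism `F → Ḡ` with the same kernel as `π`. For fixed `t` this is a condition on the
values of finitely many entries of the table per word, so it cuts out a closed set, and there are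
countably many `t`. -/

namespace MonoidHom

theorem exists_injective_iff_exists_ker_eq {F H K : Type*} [Group F] [Group H] [Group K]
    (π : F →* H) (hπ : Function.Surjective π) :
    (∃ f : H →* K, Function.Injective f) ↔ ∃ φ : F →* K, φ.ker = π.ker := by
  constructor
  · rintro ⟨f, hf⟩
    exact ⟨f.comp π, ker_comp_of_injective π f hf⟩
  · rintro ⟨φ, hφ⟩
    let e : H ≃* F ⧸ φ.ker := (QuotientGroup.quotientKerEquivOfSurjective π hπ).symm.trans
      (QuotientGroup.quotientMulEquivOfEq hφ.symm)
    exact ⟨(QuotientGroup.kerLift φ).comp e,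
      (QuotientGroup.kerLift_injective φ).comp e.injective⟩

end MonoidHom

namespace GroupTables

theorem toC_mul_toC (G : ↥GroupTables) (a b : ℕ) : toC G a * toC G b = toC G (G.1 (a, b)) := rfl

theorem toC_eq_one {G : ↥GroupTables} {a : ℕ} : toC G a = 1 ↔ a = 0 := Iff.rfl

theorem continuous_tableMul :
    Continuous fun p : ↥GroupTables × (ℕ × ℕ) => p.1.1 p.2 :=
  continuous_prod_of_discrete_right.mpr fun ab => (continuous_apply ab).comp continuous_subtype_val

theorem continuous_tableInv :
    Continuous fun p : ↥GroupTables × ℕ => fromC p.1 (toC p.1 p.2)⁻¹ := by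
  refine continuous_prod_of_discrete_right.mpr fun a => continuous_discrete_rng.mpr fun b => ?_
  have : (fun G : ↥GroupTables => fromC G (toC G a)⁻¹) ⁻¹' {b} = {G | G.1 (a, b) = 0} := by
    ext G
    simp only [Set.mem_preimage, Set.mem_singleton_iff, Set.mem_ofPred_eq,
      ← toC_eq_one (G := G), ← toC_mul_toC, mul_eq_one_iff_inv_eq]
    rfl
  rw [this]
  exact (isOpen_discrete {0}).preimage (continuous_tableMul.comp (Continuous.prodMk_left (a, b)))

section Words

variable {α : Type*} (t : α → ℕ)

noncomputable def wordValue (w : FreeGroup α) (G : ↥GroupTables) : ℕ :=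
  fromC G (FreeGroup.lift (fun i => toC G (t i)) w)

theorem wordValue_one : wordValue t 1 = fun _ => 0 := by
  funext G
  simp only [wordValue, map_one]
  rfl

theorem wordValue_of (i : α) : wordValue t (FreeGroup.of i) = fun _ => t i := by
  funext G
  simp only [wordValue, FreeGroup.lift_apply_of]
  rfl

theorem wordValue_inv_of (i : α) :
    wordValue t (FreeGroup.of i)⁻¹ = fun G => fromC G (toC G (t i))⁻¹ := by
  funext G
  simp only [wordValue, map_inv, FreeGroup.lift_apply_of]

theorem wordValue_mul (x y : FreeGroup α) :
    wordValue t (x * y) = fun G => G.1 (wordValue t x G, wordValue t y G) := by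
  funext G
  simp only [wordValue, map_mul]
  rfl

theorem continuous_wordValue (w : FreeGroup α) : Continuous (wordValue t w) := by
  induction w using FreeGroup.induction_on with
  | C1 => exact wordValue_one t ▸ continuous_const
  | of i => exact wordValue_of t i ▸ continuous_const
  | inv_of i _ =>
    exact wordValue_inv_of t i ▸ continuous_tableInv.comp (Continuous.prodMk_left (t i))
  | mul x y hx hy =>
    exact wordValue_mul t x y ▸ continuous_tableMul.comp (continuous_id.prodMk (hx.prodMk hy))

def kernelLocus {H : Type*} [Group H] (π : FreeGroup α →* H) : Set ↥GroupTables :=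
  {G | (FreeGroup.lift fun i => toC G (t i)).ker = π.ker}

theorem isClosed_kernelLocus {H : Type*} [Group H] (π : FreeGroup α →* H) :
    IsClosed (kernelLocus t π) := by
  have : kernelLocus t π = ⋂ w, wordValue t w ⁻¹' {n | n = 0 ↔ π w = 1} := by
    ext G
    simp only [kernelLocus, Subgroup.ext_iff, MonoidHom.mem_ker, Set.mem_iInter,
      Set.mem_preimage]
    rfl
  rw [this]
  exact isClosed_iInter fun w => (isClosed_discrete _).preimage (continuous_wordValue t w)

end Words

end GroupTables

/-- For every finitely generated group `H`, the embeddability set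
`E_H = {G ∈ 𝒢 : H embeds into Ḡ}` is `Fσ` in `𝒢`: a countable union of closed sets. -/
theorem embeddability_Fsigma (H : Type*) [Group H] (hfg : Group.FG H) :
    ∃ C : ℕ → Set ↥GroupTables, (∀ n, IsClosed (C n)) ∧
      {G : ↥GroupTables | ∃ f : H →* Carrier G, Function.Injective f} = ⋃ n, C n := by
  obtain ⟨α, _, π, hπ⟩ := Group.fg_iff_exists_freeGroup_hom_surjective_finite.mp hfg
  have hE : {G : ↥GroupTables | ∃ f : H →* Carrier G, Function.Injective f} =
      ⋃ t : α → ℕ, GroupTables.kernelLocus t π := by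
    ext G
    simp only [Set.mem_ofPred_eq, Set.mem_iUnion,
      MonoidHom.exists_injective_iff_exists_ker_eq π hπ, FreeGroup.lift.surjective.exists]
    rfl
  obtain ⟨e, he⟩ := exists_surjective_nat (α → ℕ)
  exact ⟨fun n => GroupTables.kernelLocus (e n) π,
    fun n => GroupTables.isClosed_kernelLocus (e n) π,
    hE.trans (he.iUnion_comp fun t => GroupTables.kernelLocus t π).symm⟩
end
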